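/- arXiv:2010.00726 — 4 statements merged into one kernel-verified Lean document; each statement's English description precedes it below -/
import Mathlib

section
/- Let $(V,\mathcal{B},\mu)$ be a probability space, $X \in \mathcal{B}$, $\mathcal{D} \subseteq \mathcal{B}$ a sub-$\sigma$-algebra, and $\varepsilon > 0$. If $\|\chi_X - \mathbb{E}(\chi_X \mid \mathcal{D})\|_{L^2} \le \varepsilon^2/2$, then there exists $Y \in \mathcal{D}$ with $\|\chi_X - \chi_Y\|_{L^2} \le 3\varepsilon$. -/
open MeasureTheory

/-- If the indicator of `X` is within `ε²/2` (in `L²`) of its conditional expectation on a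
sub-σ-algebra `m`, then `X` is within `3ε` (in `L²`) of some `m`-measurable set `Y`. -/
theorem stmt_1 {V : Type*} (m : MeasurableSpace V) {mV : MeasurableSpace V} (μ : Measure V) [IsProbabilityMeasure μ]
    (hm : m ≤ mV) (X : Set V) (hX : MeasurableSet X)
    (ε : ℝ) (hε : 0 < ε)
    (h : eLpNorm (X.indicator (fun _ => (1 : ℝ)) -
        μ[X.indicator (fun _ => (1 : ℝ)) | m]) 2 μ ≤ ENNReal.ofReal (ε ^ 2 / 2)) :
    ∃ Y : Set V, MeasurableSet[m] Y ∧
      eLpNorm (X.indicator (fun _ => (1 : ℝ)) - Y.indicator (fun _ => (1 : ℝ))) 2 μ ≤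
        ENNReal.ofReal (3 * ε) := by
  set f : V → ℝ := X.indicator (fun _ => (1 : ℝ)) with hf
  set g : V → ℝ := μ[f | m] with hg
  by_cases hε3 : ε ≤ 3
  · refine ⟨{v | (1:ℝ)/2 ≤ g v}, ?_, ?_⟩
    · exact @measurableSet_le _ _ _ _ _ m _ _ _ _ _ measurable_const
        stronglyMeasurable_condExp.measurable
    · set Y : Set V := {v | (1:ℝ)/2 ≤ g v} with hY
      have hpt : ∀ v, ‖(f - Y.indicator (fun _ => (1:ℝ))) v‖ ≤
          ‖((2:ℝ) • (f - g)) v‖ := by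
        intro v
        simp only [Pi.sub_apply, Pi.smul_apply, smul_eq_mul, Real.norm_eq_abs, abs_mul, abs_two]
        by_cases hvX : v ∈ X <;> by_cases hvY : v ∈ Y
        · simp only [hf, Set.indicator_of_mem hvX, Set.indicator_of_mem hvY, sub_self, abs_zero]
          positivity
        · have hgv : g v < 1/2 := by simpa [hY] using hvY
          simp only [hf, Set.indicator_of_mem hvX, Set.indicator_of_notMem hvY, sub_zero, abs_one]
          have h1 : (1:ℝ) - g v ≤ |1 - g v| := le_abs_self _
          linarith
        · have hgv : (1:ℝ)/2 ≤ g v := hvY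
          simp only [hf, Set.indicator_of_notMem hvX, Set.indicator_of_mem hvY, zero_sub, abs_neg,
            abs_one]
          have h1 : g v ≤ |g v| := le_abs_self _
          linarith
        · simp only [hf, Set.indicator_of_notMem hvX, Set.indicator_of_notMem hvY, sub_self,
            abs_zero]
          positivity
      calc eLpNorm (f - Y.indicator (fun _ => (1:ℝ))) 2 μ
          ≤ eLpNorm ((2:ℝ) • (f - g)) 2 μ := eLpNorm_mono hpt
        _ = ‖(2:ℝ)‖₊ * eLpNorm (f - g) 2 μ := eLpNorm_const_smul _ _ _ _
        _ ≤ 2 * ENNReal.ofReal (ε ^ 2 / 2) := by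
            exact mul_le_mul' (by norm_num) h
        _ = ENNReal.ofReal (ε ^ 2) := by
            rw [show (2:ENNReal) = ENNReal.ofReal 2 by norm_num,
              ← ENNReal.ofReal_mul (by norm_num)]
            ring_nf
        _ ≤ ENNReal.ofReal (3 * ε) := by
            apply ENNReal.ofReal_le_ofReal; nlinarith
  · refine ⟨∅, @MeasurableSet.empty _ m, ?_⟩
    have : eLpNorm (f - (∅ : Set V).indicator (fun _ => (1:ℝ))) 2 μ ≤
        eLpNorm (fun _ : V => (1:ℝ)) 2 μ := by
      apply eLpNorm_mono
      intro v
      simp only [Set.indicator_empty, Pi.sub_apply, sub_zero, Real.norm_eq_abs, abs_one, hf]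
      by_cases hv : v ∈ X <;> simp [hv]
    refine this.trans ?_
    have h1 : eLpNorm (fun _ : V => (1:ℝ)) 2 μ = 1 := by
      rw [eLpNorm_const _ (by norm_num) (NeZero.ne μ)]
      simp
    rw [h1, ENNReal.one_le_ofReal]
    nlinarith
end

section
/- For every $\varepsilon > 0$ and $m \in \mathbb{N}$ there exist $N \in \mathbb{N}$ and $\xi > 0$ such that for any probability space $(V,\mathcal{B},\mu)$ and any sets $X_1, \ldots, X_N \in \mathcal{B}$ with $\mu(X_i) \ge \varepsilon$ for all $i$, there is a subset $I \subseteq \{1,\ldots,N\}$ with $|I| \ge m$ and $\mu(\bigcap_{i \in I} X_i) > \xi$. -/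
/-!
By Cauchy–Schwarz (the variance of `∑ i, 1_{X i}` is nonnegative), `∑ i, ∑ j, μ (X i ∩ X j)` is
at least `(N ε) ^ 2`, so some `X i₀` meets at least `N ε ^ 2 / 2 - 1` of the other sets in measure
more than `ε ^ 2 / 2`. The induction on `m` is applied to these sets `X i₀ ∩ X j`, and adding `i₀`
to the subfamily it yields gains one index.
-/

open MeasureTheory ProbabilityTheory Finset

lemma integral_sum_indicator_one {Ω ι : Type*} [MeasurableSpace Ω] (μ : Measure Ω)
    [IsFiniteMeasure μ] (s : Finset ι) {Y : ι → Set Ω} (hY : ∀ i, MeasurableSet (Y i)) :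
    ∫ ω, ∑ i ∈ s, (Y i).indicator 1 ω ∂μ = ∑ i ∈ s, μ.real (Y i) := by
  rw [integral_finsetSum _ fun i _ ↦ (integrable_const 1).indicator (hY i)]
  simp [integral_indicator_one (hY _)]

lemma sq_sum_measureReal_le_sum_sum_measureReal_inter {Ω ι : Type*} [MeasurableSpace Ω]
    (μ : Measure Ω) [IsProbabilityMeasure μ] [Fintype ι] {X : ι → Set Ω}
    (hX : ∀ i, MeasurableSet (X i)) :
    (∑ i, μ.real (X i)) ^ 2 ≤ ∑ i, ∑ j, μ.real (X i ∩ X j) := by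
  set f : Ω → ℝ := fun ω ↦ ∑ i, (X i).indicator 1 ω
  have hf : MemLp f 2 μ :=
    memLp_finsetSum _ fun i _ ↦ memLp_indicator_const 2 (hX i) 1 (Or.inr (measure_ne_top _ _))
  have h_sq : f ^ 2 = fun ω ↦ ∑ i, ∑ j, (X i ∩ X j).indicator 1 ω := by
    ext ω
    simp only [f, Pi.pow_apply, sq, Finset.sum_mul_sum, Set.inter_indicator_one, Pi.mul_apply]
  have h_var := variance_nonneg f μ
  rw [variance_eq_sub hf, h_sq, integral_finsetSum _ fun i _ ↦ integrable_finsetSum _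
    fun j _ ↦ (integrable_const 1).indicator ((hX i).inter (hX j)),
    integral_sum_indicator_one μ _ hX] at h_var
  simp_rw [integral_sum_indicator_one μ _ fun j ↦ (hX _).inter (hX j)] at h_var
  linarith

lemma sum_le_card_filter_lt_add_card_mul {ι : Type*} (s : Finset ι) {a : ι → ℝ}
    (ha : ∀ j ∈ s, a j ≤ 1) {δ : ℝ} (hδ : 0 ≤ δ) :
    ∑ j ∈ s, a j ≤ #{j ∈ s | δ < a j} + #s * δ := by
  rw [← sum_filter_add_sum_filter_not s (fun j ↦ δ < a j)]
  gcongr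
  · simpa using sum_le_card_nsmul _ _ 1 fun j hj ↦ ha j (mem_filter.1 hj).1
  · calc ∑ j ∈ s with ¬δ < a j, a j ≤ #{j ∈ s | ¬δ < a j} * δ := by
          simpa using sum_le_card_nsmul _ _ δ fun j hj ↦ not_lt.1 (mem_filter.1 hj).2
      _ ≤ #s * δ := by gcongr; exact filter_subset _ _

lemma exists_card_measureReal_inter_gt {Ω ι : Type*} [MeasurableSpace Ω] (μ : Measure Ω)
    [IsProbabilityMeasure μ] [Fintype ι] [Nonempty ι] [DecidableEq ι] {X : ι → Set Ω}
    (hX : ∀ i, MeasurableSet (X i)) {ε : ℝ} (hε : 0 ≤ ε) (hXε : ∀ i, ε ≤ μ.real (X i)) :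
    ∃ i, Fintype.card ι * ε ^ 2 / 2 - 1 ≤
      #(({j | ε ^ 2 / 2 < μ.real (X i ∩ X j)} : Finset ι).erase i) := by
  have h_total : ∑ _i : ι, Fintype.card ι * ε ^ 2 ≤ ∑ i, ∑ j, μ.real (X i ∩ X j) :=
    calc ∑ _i : ι, Fintype.card ι * ε ^ 2 = (∑ _i : ι, ε) ^ 2 := by simp; ring
      _ ≤ (∑ i, μ.real (X i)) ^ 2 := by gcongr with i; exact hXε i
      _ ≤ ∑ i, ∑ j, μ.real (X i ∩ X j) := sq_sum_measureReal_le_sum_sum_measureReal_inter μ hX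
  obtain ⟨i, -, hi⟩ := exists_le_of_sum_le univ_nonempty h_total
  refine ⟨i, ?_⟩
  set S : Finset ι := {j | ε ^ 2 / 2 < μ.real (X i ∩ X j)}
  have h_count := sum_le_card_filter_lt_add_card_mul univ (a := fun j ↦ μ.real (X i ∩ X j))
    (fun _ _ ↦ measureReal_le_one) (by positivity : 0 ≤ ε ^ 2 / 2)
  have h_erase : (#S : ℝ) ≤ #(S.erase i) + 1 := by
    have := pred_card_le_card_erase (s := S) (a := i)
    exact_mod_cast (by omega : #S ≤ #(S.erase i) + 1)
  simp only [card_univ] at h_count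
  linarith

def HasLargeIntersections (ε : ℝ) (m N : ℕ) (ξ : ℝ) : Prop :=
  ∀ (V : Type) [MeasurableSpace V] (μ : Measure V) [IsProbabilityMeasure μ] (X : Fin N → Set V),
    (∀ i, MeasurableSet (X i)) → (∀ i, ENNReal.ofReal ε ≤ μ (X i)) →
      ∃ I : Finset (Fin N), m ≤ #I ∧ ENNReal.ofReal ξ < μ (⋂ i ∈ I, X i)

lemma hasLargeIntersections_one {ε : ℝ} (hε : 0 < ε) : HasLargeIntersections ε 1 1 (ε / 2) := by
  intro V _ μ _ X _ hXε
  refine ⟨{0}, le_rfl, ?_⟩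
  simpa using (ENNReal.ofReal_lt_ofReal_iff hε).2 (half_lt_self hε) |>.trans_le (hXε 0)

lemma HasLargeIntersections.succ {ε : ℝ} (hε : 0 ≤ ε) {m N M : ℕ} {ξ : ℝ}
    (hM : (N + 1 : ℝ) ≤ M * ε ^ 2 / 2) (h : HasLargeIntersections (ε ^ 2 / 2) (m + 1) N ξ) :
    HasLargeIntersections ε (m + 2) M ξ := by
  intro V _ μ _ X hX hXε
  have : Nonempty (Fin M) := Fin.pos_iff_nonempty.1 <| Nat.pos_of_ne_zero fun hM0 ↦ by
    simp only [hM0, CharP.cast_eq_zero, zero_mul, zero_div] at hM; linarith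
  obtain ⟨i₀, hi₀⟩ := exists_card_measureReal_inter_gt μ hX hε
    fun i ↦ (ENNReal.ofReal_le_iff_le_toReal (measure_ne_top μ _)).1 (hXε i)
  set J : Finset (Fin M) := ({j | ε ^ 2 / 2 < μ.real (X i₀ ∩ X j)} : Finset _).erase i₀
  have hJ : N ≤ #J := by
    simp only [Fintype.card_fin] at hi₀
    exact_mod_cast (by linarith : (N : ℝ) ≤ #J)
  set e := J.orderEmbOfCardLe hJ
  have he : ∀ k, e k ≠ i₀ ∧ ε ^ 2 / 2 < μ.real (X i₀ ∩ X (e k)) := by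
    intro k
    simpa [J] using J.orderEmbOfCardLe_mem hJ k
  obtain ⟨I, hI, hIξ⟩ := h V μ (fun k ↦ X i₀ ∩ X (e k)) (fun k ↦ (hX _).inter (hX _))
    fun k ↦ ENNReal.ofReal_le_of_le_toReal (he k).2.le
  refine ⟨insert i₀ (I.map e.toEmbedding), ?_, hIξ.trans_le (measure_mono ?_)⟩
  · rw [card_insert_of_notMem (by simpa using fun k _ ↦ (he k).1), card_map]
    omega
  · -- `I` is nonempty (the reason the induction runs over `m + 1`), so `x ∈ X i₀`.
    obtain ⟨k₀, hk₀⟩ : I.Nonempty := card_pos.1 (by omega)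
    intro x hx
    simp only [Set.mem_iInter] at hx
    simp only [Set.mem_iInter, mem_insert, mem_map]
    rintro i (rfl | ⟨k, hk, rfl⟩)
    · exact (hx k₀ hk₀).1
    · exact (hx k hk).2

lemma exists_hasLargeIntersections (m : ℕ) {ε : ℝ} (hε : 0 < ε) :
    ∃ N ξ, 0 < ξ ∧ HasLargeIntersections ε (m + 1) N ξ := by
  induction m generalizing ε with
  | zero => exact ⟨1, ε / 2, half_pos hε, hasLargeIntersections_one hε⟩
  | succ m ih =>
    obtain ⟨N, ξ, hξ, h⟩ := ih (by positivity : 0 < ε ^ 2 / 2)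
    refine ⟨⌈2 * (N + 1) / ε ^ 2⌉₊, ξ, hξ, h.succ hε.le ?_⟩
    have := Nat.le_ceil (2 * (N + 1) / ε ^ 2)
    rw [div_le_iff₀ (by positivity)] at this
    linarith

/-- Bergelson's lemma: for every `ε > 0` and `m` there are `N` and `ξ > 0` such that any `N`
sets of measure at least `ε` in a probability space contain a subfamily of size at least `m`
whose intersection has measure more than `ξ`. -/
theorem stmt_3 (ε : ℝ) (hε : 0 < ε) (m : ℕ) :
    ∃ (N : ℕ) (ξ : ℝ), 0 < ξ ∧
      ∀ (V : Type) (mV : MeasurableSpace V) (μ : Measure V), IsProbabilityMeasure μ →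
      ∀ X : Fin N → Set V, (∀ i, MeasurableSet (X i)) →
        (∀ i, ENNReal.ofReal ε ≤ μ (X i)) →
        ∃ I : Finset (Fin N), m ≤ I.card ∧ ENNReal.ofReal ξ < μ (⋂ i ∈ I, X i) := by
  obtain ⟨N, ξ, hξ, h⟩ := exists_hasLargeIntersections m hε
  refine ⟨N, ξ, hξ, fun V mV μ hμ X hX hXε ↦ ?_⟩
  obtain ⟨I, hI, hIξ⟩ := h V μ X hX hXε
  exact ⟨I, by omega, hIξ⟩
end

section
/- For any real numbers $0 \le p < q \le 1$ there exists $N = N(p,q) \in \mathbb{N}$ such that: for every probability space $(V,\mathcal{B},\mu)$ and sets $A_1,\ldots,A_n, B_1,\ldots,B_n \in \mathcal{B}$ satisfying $\mu(A_i \cap B_j) \ge q$ for all $i < j$ and $\mu(A_j \cap B_i) \le p$ for all $i < j$, one has $n \le N$. -/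
/-!
Embed the sets in `L²(μ)` as indicator vectors `aᵢ, bⱼ` in the unit ball, so that
`⟪aᵢ, bⱼ⟫ = μ(Aᵢ ∩ Bⱼ)`. Colouring each pair `i < j` by the `η`-bucket of `⟪bᵢ, bⱼ⟫ ∈ [-1, 1]`,
Ramsey's theorem for pairs yields a subsequence of length `2M + 1` on which all the inner products
`⟪bᵢ, bⱼ⟫`, `i ≠ j`, lie within `η` of a common value `β`. Take `a` at the middle index and
`F = ∑_{right} bⱼ - ∑_{left} bⱼ`: the half-graph pattern gives `⟪a, F⟫ ≥ M (q - p)`, while,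
the coefficients of `F` summing to zero, `‖F‖²` is the Gram form with `β` subtracted from every
entry, so `‖F‖² ≤ 4M + 4ηM²`. For `η = (q - p)² / 8` and `M > 8 / (q - p)²` this contradicts
Cauchy–Schwarz.
-/

open MeasureTheory Finset
open scoped RealInnerProductSpace

section Ramsey

variable {α κ : Type*} [LinearOrder α] (f : α → α → κ) {t : Finset κ}

theorem exists_subset_card_eq_color_eq_left (ht : t.Nonempty) (L : ℕ) {P : Finset α}
    (hf : ∀ x ∈ P, ∀ y ∈ P, x < y → f x y ∈ t) (hP : (#t + 1) ^ L ≤ #P) :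
    ∃ T ⊆ P, #T = L ∧ ∃ col : α → κ, (∀ x ∈ T, col x ∈ t) ∧
      ∀ x ∈ T, ∀ y ∈ T, x < y → f x y = col x := by
  classical
  induction L generalizing P with
  | zero => exact ⟨∅, empty_subset _, rfl, fun x => f x x, by simp, by simp⟩
  | succ L ih =>
    have hne : P.Nonempty := card_pos.mp (lt_of_lt_of_le (by positivity) hP)
    set x := P.min' hne
    have hxP : x ∈ P := P.min'_mem hne
    have hrest : #t * (#t + 1) ^ L ≤ #(P.erase x) := by
      rw [card_erase_of_mem hxP]
      have : (#t + 1) ^ (L + 1) = #t * (#t + 1) ^ L + (#t + 1) ^ L := by ring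
      have : 0 < (#t + 1) ^ L := by positivity
      omega
    obtain ⟨c, hct, hc⟩ := exists_le_card_fiber_of_mul_le_card_of_maps_to
      (fun y hy => hf x hxP y (mem_of_mem_erase hy) (P.min'_lt_of_mem_erase_min' hne hy)) ht hrest
    obtain ⟨T, hTsub, hTcard, col, hcol_mem, hcol⟩ := ih (P := {y ∈ P.erase x | f x y = c})
      (fun y hy z hz => hf y (mem_of_mem_erase (mem_filter.1 hy).1) z
        (mem_of_mem_erase (mem_filter.1 hz).1)) hc
    have hxT : x ∉ T := fun h => by simpa using (mem_filter.1 (hTsub h)).1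
    refine ⟨insert x T, insert_subset hxP fun y hy => mem_of_mem_erase (mem_filter.1 (hTsub hy)).1,
      by rw [card_insert_of_notMem hxT, hTcard], Function.update col x c, ?_, ?_⟩
    · intro y hy
      rcases mem_insert.1 hy with rfl | hy
      · simpa using hct
      · rw [Function.update_of_ne (ne_of_mem_of_not_mem hy hxT)]
        exact hcol_mem y hy
    · intro u hu v hv huv
      rcases mem_insert.1 hu with rfl | hu
      · rw [Function.update_self]
        rcases mem_insert.1 hv with rfl | hv
        · exact absurd huv (lt_irrefl _)
        · exact (mem_filter.1 (hTsub hv)).2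
      · have hxu : x ≤ u := P.min'_le u (mem_of_mem_erase (mem_filter.1 (hTsub hu)).1)
        rcases mem_insert.1 hv with rfl | hv
        · exact absurd (hxu.trans_lt huv) (lt_irrefl _)
        · rw [Function.update_of_ne (ne_of_mem_of_not_mem hu hxT)]
          exact hcol u hu v hv huv

theorem exists_orderEmbedding_monochromatic [Fintype α] (ht : t.Nonempty)
    (hf : ∀ x y, x < y → f x y ∈ t) {m : ℕ} (hm : (#t + 1) ^ (#t * m) ≤ Fintype.card α) :
    ∃ g : Fin m ↪o α, ∃ c, ∀ i j, i < j → f (g i) (g j) = c := by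
  classical
  obtain ⟨T, -, hTcard, col, hcol_mem, hcol⟩ :=
    exists_subset_card_eq_color_eq_left f ht (#t * m) (fun x _ y _ => hf x y) hm
  obtain ⟨c, -, hc⟩ := exists_le_card_fiber_of_mul_le_card_of_maps_to hcol_mem ht hTcard.ge
  obtain ⟨S, hS, hScard⟩ := exists_subset_card_eq hc
  refine ⟨S.orderEmbOfFin hScard, c, fun i j hij => ?_⟩
  have hmem : ∀ k, S.orderEmbOfFin hScard k ∈ {x ∈ T | col x = c} :=
    fun k => hS (orderEmbOfFin_mem S hScard k)
  rw [hcol _ (mem_filter.1 (hmem i)).1 _ (mem_filter.1 (hmem j)).1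
    ((S.orderEmbOfFin hScard).strictMono hij), (mem_filter.1 (hmem i)).2]

end Ramsey

theorem abs_sub_floor_div_mul_le {y η : ℝ} (hy : 0 ≤ y) (hη : 0 < η) :
    |y - ⌊y / η⌋₊ * η| ≤ η := by
  have hlo : (⌊y / η⌋₊ : ℝ) * η ≤ y := (le_div_iff₀ hη).1 (Nat.floor_le (by positivity))
  have hhi : y < (⌊y / η⌋₊ + 1) * η := (div_lt_iff₀ hη).1 (Nat.lt_floor_add_one _)
  rw [abs_le]
  constructor <;> nlinarith

def Fin.offMiddle (M : ℕ) : Fin M ⊕ Fin M → Fin (2 * M + 1) :=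
  Sum.elim (fun i => ⟨i, by omega⟩) (fun i => ⟨M + 1 + i, by omega⟩)

theorem Fin.offMiddle_injective (M : ℕ) : Function.Injective (Fin.offMiddle M) := by
  rintro (i | i) (j | j) h <;>
    simp only [Fin.offMiddle, Sum.elim_inl, Sum.elim_inr, Fin.ext_iff, Sum.inl.injEq,
      Sum.inr.injEq, reduceCtorEq] at h ⊢ <;> omega

theorem Fin.offMiddle_inl_lt {M : ℕ} (i : Fin M) : Fin.offMiddle M (.inl i) < ⟨M, by omega⟩ := by
  simp [Fin.offMiddle, Fin.lt_def]

theorem Fin.lt_offMiddle_inr {M : ℕ} (i : Fin M) : ⟨M, by omega⟩ < Fin.offMiddle M (.inr i) := by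
  simp only [Fin.offMiddle, Sum.elim_inr, Fin.mk_lt_mk]
  omega

section InnerProduct

variable {E : Type*} [NormedAddCommGroup E] [InnerProductSpace ℝ E]

theorem abs_real_inner_le_one {x y : E} (hx : ‖x‖ ≤ 1) (hy : ‖y‖ ≤ 1) : |⟪x, y⟫| ≤ 1 :=
  (abs_real_inner_le_norm x y).trans (mul_le_one₀ hx (norm_nonneg _) hy)

theorem norm_sum_smul_sq_le_of_inner_near {ι : Type*} [Fintype ι] {w : ι → ℝ}
    (hw : ∑ i, w i = 0) {b : ι → E} (hb : ∀ i, ‖b i‖ ≤ 1) {β η : ℝ} (hβ : -1 ≤ β) (hη : 0 ≤ η)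
    (hbβ : ∀ i j, i ≠ j → |⟪b i, b j⟫ - β| ≤ η) :
    ‖∑ i, w i • b i‖ ^ 2 ≤ 2 * ∑ i, w i ^ 2 + η * (∑ i, |w i|) ^ 2 := by
  classical
  -- subtracting `β` from every Gram entry does not change the quadratic form, as `∑ w = 0`
  have hcentre : ‖∑ i, w i • b i‖ ^ 2 = ∑ i, ∑ j, w i * w j * (⟪b i, b j⟫ - β) := by
    have hβ0 : ∑ i, ∑ j, w i * w j * β = 0 := by
      simp_rw [mul_assoc, ← mul_sum, ← sum_mul, hw, zero_mul]
    rw [← real_inner_self_eq_norm_sq, sum_inner]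
    simp_rw [inner_sum, real_inner_smul_left, real_inner_smul_right, mul_sub, sum_sub_distrib,
      hβ0, sub_zero]
    exact sum_congr rfl fun i _ => sum_congr rfl fun j _ => by ring
  have hterm : ∀ i j, w i * w j * (⟪b i, b j⟫ - β) ≤
      (if i = j then 2 * w i ^ 2 else 0) + η * (|w i| * |w j|) := by
    intro i j
    split_ifs with hij
    · subst hij
      have : ⟪b i, b i⟫ ≤ 1 := by
        rw [real_inner_self_eq_norm_sq]
        nlinarith [hb i, norm_nonneg (b i)]
      nlinarith [sq_nonneg (w i), mul_nonneg hη (mul_nonneg (abs_nonneg (w i)) (abs_nonneg (w i)))]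
    · calc w i * w j * (⟪b i, b j⟫ - β) ≤ |w i * w j * (⟪b i, b j⟫ - β)| := le_abs_self _
        _ = |w i| * |w j| * |⟪b i, b j⟫ - β| := by rw [abs_mul, abs_mul]
        _ ≤ |w i| * |w j| * η := by gcongr; exact hbβ i j hij
        _ = 0 + η * (|w i| * |w j|) := by ring
  calc ‖∑ i, w i • b i‖ ^ 2
      ≤ ∑ i, ∑ j, ((if i = j then 2 * w i ^ 2 else 0) + η * (|w i| * |w j|)) := by
        rw [hcentre]; exact sum_le_sum fun i _ => sum_le_sum fun j _ => hterm i j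
    _ = 2 * ∑ i, w i ^ 2 + η * (∑ i, |w i|) ^ 2 := by
        simp only [sum_add_distrib, sum_ite_eq, mem_univ, if_true, ← mul_sum, ← sum_mul]
        ring

theorem sq_mul_sub_le_of_halfGraph {M : ℕ} {a : E} {b : Fin M ⊕ Fin M → E} {p q β η : ℝ}
    (hpq : p ≤ q) (ha : ‖a‖ ≤ 1) (hb : ∀ i, ‖b i‖ ≤ 1)
    (hp : ∀ i, ⟪a, b (.inl i)⟫ ≤ p) (hq : ∀ i, q ≤ ⟪a, b (.inr i)⟫)
    (hβ : -1 ≤ β) (hη : 0 ≤ η) (hbβ : ∀ i j, i ≠ j → |⟪b i, b j⟫ - β| ≤ η) :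
    (M * (q - p)) ^ 2 ≤ 4 * M + 4 * η * M ^ 2 := by
  set w : Fin M ⊕ Fin M → ℝ := Sum.elim (fun _ => -1) (fun _ => 1)
  have hlower : M * (q - p) ≤ ⟪a, ∑ i, w i • b i⟫ := by
    have hl : ∑ i : Fin M, ⟪a, b (.inl i)⟫ ≤ M * p := by
      simpa using sum_le_sum fun i (_ : i ∈ univ) => hp i
    have hr : M * q ≤ ∑ i : Fin M, ⟪a, b (.inr i)⟫ := by
      simpa using sum_le_sum fun i (_ : i ∈ univ) => hq i
    rw [Fintype.sum_sum_type, inner_add_right, inner_sum, inner_sum]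
    simp only [w, Sum.elim_inl, Sum.elim_inr, real_inner_smul_right, neg_one_mul, one_mul,
      sum_neg_distrib]
    linarith
  have hupper : ⟪a, ∑ i, w i • b i⟫ ≤ ‖∑ i, w i • b i‖ :=
    (real_inner_le_norm _ _).trans (mul_le_of_le_one_left (norm_nonneg _) ha)
  have hgram := norm_sum_smul_sq_le_of_inner_near (w := w) (by simp [w, Fintype.sum_sum_type])
    hb hβ hη hbβ
  have hw2 : ∑ i, w i ^ 2 = 2 * M := by
    simp only [w, Fintype.sum_sum_type, Sum.elim_inl, Sum.elim_inr, even_two, Even.neg_pow,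
      one_pow, sum_const, card_univ, Fintype.card_fin, nsmul_eq_mul, mul_one]
    ring
  have hw1 : ∑ i, |w i| = 2 * M := by
    simp only [w, Fintype.sum_sum_type, Sum.elim_inl, Sum.elim_inr, abs_neg, abs_one, sum_const,
      card_univ, Fintype.card_fin, nsmul_eq_mul, mul_one]
    ring
  rw [hw2, hw1] at hgram
  calc (M * (q - p)) ^ 2 ≤ ‖∑ i, w i • b i‖ ^ 2 := by
        have : 0 ≤ (M : ℝ) * (q - p) := mul_nonneg (Nat.cast_nonneg _) (sub_nonneg.2 hpq)
        gcongr
        exact hlower.trans hupper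
    _ ≤ 4 * M + 4 * η * M ^ 2 := by linarith

theorem sq_mul_sub_le_of_monochromatic {n M : ℕ} {a b : Fin n → E} {p q η : ℝ} (hpq : p ≤ q)
    (hη : 0 < η) (ha : ∀ i, ‖a i‖ ≤ 1) (hb : ∀ i, ‖b i‖ ≤ 1)
    (hab : ∀ i j, i < j → q ≤ ⟪a i, b j⟫) (hba : ∀ i j, i < j → ⟪a j, b i⟫ ≤ p)
    (g : Fin (2 * M + 1) ↪o Fin n) {c : ℕ}
    (hg : ∀ i j, i < j → ⌊(⟪b (g i), b (g j)⟫ + 1) / η⌋₊ = c) :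
    (M * (q - p)) ^ 2 ≤ 4 * M + 4 * η * M ^ 2 := by
  have hnear : ∀ x y, x < y → |⟪b (g x), b (g y)⟫ - (c * η - 1)| ≤ η := by
    intro x y hxy
    have h := abs_sub_floor_div_mul_le (y := ⟪b (g x), b (g y)⟫ + 1)
      (by linarith [abs_le.1 (abs_real_inner_le_one (hb (g x)) (hb (g y)))]) hη
    rw [hg x y hxy] at h
    rwa [show ⟪b (g x), b (g y)⟫ + 1 - c * η = ⟪b (g x), b (g y)⟫ - (c * η - 1) by ring] at h
  refine sq_mul_sub_le_of_halfGraph (b := b ∘ g ∘ Fin.offMiddle M) (β := c * η - 1) hpq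
    (ha (g ⟨M, by omega⟩)) (fun _ => hb _)
    (fun i => hba _ _ (g.strictMono (Fin.offMiddle_inl_lt i)))
    (fun i => hab _ _ (g.strictMono (Fin.lt_offMiddle_inr i)))
    (by nlinarith [(Nat.cast_nonneg c : (0 : ℝ) ≤ c)]) hη.le fun i j hij => ?_
  rcases lt_or_gt_of_ne ((Fin.offMiddle_injective M).ne hij) with h | h
  · exact hnear _ _ h
  · rw [Function.comp_apply, real_inner_comm]
    exact hnear _ _ h

theorem exists_halfGraph_length_le {p q : ℝ} (hpq : p < q) :
    ∃ N : ℕ, ∀ (E : Type*) [NormedAddCommGroup E] [InnerProductSpace ℝ E] (n : ℕ)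
      (a b : Fin n → E), (∀ i, ‖a i‖ ≤ 1) → (∀ i, ‖b i‖ ≤ 1) →
      (∀ i j, i < j → q ≤ ⟪a i, b j⟫) → (∀ i j, i < j → ⟪a j, b i⟫ ≤ p) → n ≤ N := by
  have hs : 0 < (q - p) ^ 2 := by nlinarith
  set η := (q - p) ^ 2 / 8
  have hη : 0 < η := by positivity
  obtain ⟨M, hM⟩ := exists_nat_gt (8 / (q - p) ^ 2)
  set K := ⌊2 / η⌋₊
  refine ⟨(K + 2) ^ ((K + 1) * (2 * M + 1)), fun E _ _ n a b ha hb hab hba => ?_⟩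
  by_contra! hn
  have hcolour : ∀ i j : Fin n, i < j → ⌊(⟪b i, b j⟫ + 1) / η⌋₊ ∈ range (K + 1) := by
    intro i j _
    refine mem_range.2 (Nat.lt_succ_of_le (Nat.floor_le_floor ?_))
    gcongr
    linarith [abs_le.1 (abs_real_inner_le_one (hb i) (hb j))]
  obtain ⟨g, c, hg⟩ := exists_orderEmbedding_monochromatic _ ⟨0, by simp⟩ hcolour
    (m := 2 * M + 1) (by simpa using hn.le)
  have hbound := sq_mul_sub_le_of_monochromatic hpq.le hη ha hb hab hba g hg
  rw [show η = (q - p) ^ 2 / 8 from rfl] at hbound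
  have hMs : 8 < M * (q - p) ^ 2 := (div_lt_iff₀ hs).1 hM
  have hMpos : (0 : ℝ) < M := by nlinarith
  nlinarith [mul_pos hMpos (sub_pos.2 hMs)]

end InnerProduct

theorem norm_indicatorConstLp_one_le_one {V : Type*} [MeasurableSpace V] {μ : Measure V}
    [IsProbabilityMeasure μ] {s : Set V} (hs : MeasurableSet s) :
    ‖indicatorConstLp 2 hs (measure_ne_top μ s) (1 : ℝ)‖ ≤ 1 := by
  refine norm_indicatorConstLp_le.trans ?_
  rw [norm_one, one_mul]
  exact Real.rpow_le_one measureReal_nonneg measureReal_le_one (by norm_num)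

theorem stmt_13_general (p q : ℝ) (hp : 0 ≤ p) (hpq : p < q) :
    ∃ N : ℕ,
      ∀ (V : Type) (mV : MeasurableSpace V) (μ : Measure V), IsProbabilityMeasure μ →
      ∀ (n : ℕ) (A B : Fin n → Set V),
        (∀ i, MeasurableSet (A i)) → (∀ i, MeasurableSet (B i)) →
        (∀ i j : Fin n, i < j → ENNReal.ofReal q ≤ μ (A i ∩ B j)) →
        (∀ i j : Fin n, i < j → μ (A j ∩ B i) ≤ ENNReal.ofReal p) →
        n ≤ N := by
  obtain ⟨N, hN⟩ := exists_halfGraph_length_le hpq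
  refine ⟨N, fun V _ μ _ n A B hA hB hAB hBA => ?_⟩
  refine hN (Lp ℝ 2 μ) n (fun i => indicatorConstLp 2 (hA i) (measure_ne_top μ _) 1)
    (fun j => indicatorConstLp 2 (hB j) (measure_ne_top μ _) 1)
    (fun i => norm_indicatorConstLp_one_le_one _) (fun j => norm_indicatorConstLp_one_le_one _)
    (fun i j hij => ?_) (fun i j hij => ?_)
  · rw [L2.real_inner_indicatorConstLp_one_indicatorConstLp_one, measureReal_def]
    exact (ENNReal.ofReal_le_iff_le_toReal (measure_ne_top μ _)).1 (hAB i j hij)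
  · rw [L2.real_inner_indicatorConstLp_one_indicatorConstLp_one, measureReal_def]
    exact ENNReal.toReal_le_of_le_ofReal hp (hBA i j hij)

/-- Hrushovski–Tao stability of probability algebras: for `0 ≤ p < q ≤ 1` there is a bound
`N` on the length of any "half-graph" configuration of sets with gap `(p, q)`. -/
theorem stmt_13 (p q : ℝ) (hp : 0 ≤ p) (hpq : p < q) (hq : q ≤ 1) :
    ∃ N : ℕ,
      ∀ (V : Type) (mV : MeasurableSpace V) (μ : Measure V), IsProbabilityMeasure μ →
      ∀ (n : ℕ) (A B : Fin n → Set V),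
        (∀ i, MeasurableSet (A i)) → (∀ i, MeasurableSet (B i)) →
        (∀ i j : Fin n, i < j → ENNReal.ofReal q ≤ μ (A i ∩ B j)) →
        (∀ i j : Fin n, i < j → μ (A j ∩ B i) ≤ ENNReal.ofReal p) →
        n ≤ N :=
  stmt_13_general p q hp hpq
end

section
/- Let $k \ge 1$ and $\bar{d} = (d_{r,s})$ with $d_{r,s} \in \mathbb{N}$ indexed by pairs $r < s$ in $[0,1]$. Set $D_{r,s} := 2^{d_{r,s}^k}$. If $f : V_1 \times \cdots \times V_{k+1} \to [0,1]$ satisfies $\mathrm{VC}_k(f) \le \bar{d}$ and $\sigma$ is a permutation of $[k+1]$, then the permuted function $f^{\sigma}(x_1,\ldots,x_{k+1}) := f(x_{\sigma(1)},\ldots,x_{\sigma(k+1)})$ satisfies $\mathrm{VC}_k(f^{\sigma}) \le \bar{D}$. -/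
/-- A box `A = A₁ × ⋯ × A_k` is `(r,s)`-shattered by `f : V₁ × ⋯ × V_{k+1} → ℝ` if for every
subset `S` of the box there is `c ∈ V_{k+1}` with `f(ā, c) ≤ r` on `S` and `f(ā, c) ≥ s` on
the rest of the box. -/
def IsRSShattered {k : ℕ} {V : Fin (k + 1) → Type}
    (f : (∀ i, V i) → ℝ) (r s : ℝ) (A : ∀ i : Fin k, Set (V i.castSucc)) : Prop :=
  ∀ S : Set (∀ i : Fin k, V i.castSucc),
    (∀ a ∈ S, ∀ i, a i ∈ A i) →
    ∃ c : V (Fin.last k), ∀ a : ∀ i : Fin k, V i.castSucc,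
      (∀ i, a i ∈ A i) →
        (a ∈ S → f (Fin.snoc a c) ≤ r) ∧ (a ∉ S → s ≤ f (Fin.snoc a c))

/-- `VC_k(f) ≤ d̄`: for every pair `r < s` in `[0,1]`, no box with all sides of size
`d̄ r s` is `(r,s)`-shattered by `f`. -/
def VCkFunLE {k : ℕ} {V : Fin (k + 1) → Type}
    (f : (∀ i, V i) → ℝ) (d : ℝ → ℝ → ℕ) : Prop :=
  ∀ r s : ℝ, 0 ≤ r → r < s → s ≤ 1 →
    ∀ A : ∀ i : Fin k, Finset (V i.castSucc),
      (∀ i, (A i).card = d r s) → ¬ IsRSShattered f r s (fun i => ↑(A i))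

/-!
A permutation of the variables only moves the parameter: `f^σ` shatters a box with its parameter
in the last coordinate exactly when `f` shatters the permuted box with its parameter in
coordinate `p = σ (last k)`. If `p` is the last coordinate, shrinking the box finishes the proof.
Otherwise the parameter and the last coordinate `q` trade places by dualization: choose sides of
size `d` off `p` and `q`, and index the `q`-side, of size `2 ^ d ^ k`, by the labellings `L` of the
resulting grid with `d` columns. Shattering the set "column `t` of `L`" for each `t` yields
parameters `c t`, which form the new `p`-side, and a labelling of the new box is realised by the
point of the `q`-side that indexes it.
-/

open Function Finset Fintype

section Shatters

variable {X X' Y : Type*}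

def Shatters (g : X → Y → ℝ) (r s : ℝ) (P : Set X) : Prop :=
  ∀ S : Set X, ∃ c, ∀ x ∈ P, (x ∈ S → g x c ≤ r) ∧ (x ∉ S → s ≤ g x c)

variable {g : X → Y → ℝ} {r s : ℝ} {P : Set X}

theorem Shatters.mono (h : Shatters g r s P) {Q : Set X} (hQ : Q ⊆ P) : Shatters g r s Q :=
  fun S => (h S).imp fun _ hc x hx => hc x (hQ hx)

theorem Shatters.comp (h : Shatters g r s P) {g' : X' → Y → ℝ} {Q : Set X'} (e : X' → X)
    (he : Set.InjOn e Q) (hmaps : Set.MapsTo e Q P) (hg : ∀ x ∈ Q, ∀ c, g' x c = g (e x) c) :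
    Shatters g' r s Q := by
  intro S
  obtain ⟨c, hc⟩ := h (e '' (S ∩ Q))
  refine ⟨c, fun x hx => ?_⟩
  rw [hg x hx]
  refine ⟨fun hxS => (hc _ (hmaps hx)).1 ⟨x, ⟨hxS, hx⟩, rfl⟩,
    fun hxS => (hc _ (hmaps hx)).2 ?_⟩
  rintro ⟨x', ⟨hx'S, hx'Q⟩, hx'⟩
  exact hxS (he hx'Q hx hx' ▸ hx'S)

theorem Shatters.exists_finset_swap {Z : Type*} {g : X → Z → Y → ℝ}
    (hrs : r < s) {P : Finset X} {Z₀ : Finset Z} {n : ℕ}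
    (h : Shatters (fun xz y => g xz.1 xz.2 y) r s (↑P ×ˢ ↑Z₀))
    (hcard : 2 ^ (#P * n) ≤ #Z₀) (hP : n ≠ 0 → P.Nonempty) :
    ∃ C : Finset Y, #C = n ∧ Shatters (fun xy z => g xy.1 z xy.2) r s (↑P ×ˢ ↑C) := by
  classical
  set Λ := (P ×ˢ (univ : Finset (Fin n))).powerset
  obtain ⟨φ⟩ : Nonempty (Λ ↪ Z₀) :=
    Function.Embedding.nonempty_of_card_le (by simpa [Λ] using hcard)
  have hcol : ∀ t : Fin n, ∃ c : Y, ∀ x ∈ P, ∀ L : Λ,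
      ((x, t) ∈ L.1 → g x (φ L) c ≤ r) ∧ ((x, t) ∉ L.1 → s ≤ g x (φ L) c) := by
    intro t
    obtain ⟨c, hc⟩ := h {xz | ∃ L : Λ, xz.2 = φ L ∧ (xz.1, t) ∈ L.1}
    refine ⟨c, fun x hx L => ?_⟩
    have hxL := hc (x, φ L) ⟨hx, (φ L).2⟩
    refine ⟨fun hL => hxL.1 ⟨L, rfl, hL⟩, fun hL => hxL.2 ?_⟩
    rintro ⟨L', hL', hxt⟩
    exact hL (φ.injective (Subtype.ext hL') ▸ hxt)
  choose c hc using hcol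
  have hc_inj : Injective c := by
    intro t t' htt'
    by_contra hne
    obtain ⟨x, hx⟩ := hP (Fin.pos t).ne'
    let L : Λ := ⟨{(x, t)}, by simp [Λ, hx]⟩
    have h₁ := (hc t x hx L).1 (mem_singleton_self _)
    have h₂ := (hc t' x hx L).2 (by simp [L, Ne.symm hne])
    rw [← htt'] at h₂
    linarith
  refine ⟨univ.image c, by rw [card_image_of_injective _ hc_inj, card_univ, Fintype.card_fin],
    fun T => ?_⟩
  let L : Λ := ⟨(P ×ˢ univ).filter fun xt => (xt.1, c xt.2) ∈ T, by simp [Λ]⟩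
  refine ⟨φ L, ?_⟩
  rintro ⟨x, y⟩ ⟨hx : x ∈ P, hy⟩
  obtain ⟨t, -, rfl⟩ := mem_image.1 hy
  have hL : (x, t) ∈ L.1 ↔ (x, c t) ∈ T := by simp [L, hx]
  exact ⟨fun hT => (hc t x hx L).1 (hL.2 hT), fun hT => (hc t x hx L).2 (hT ∘ hL.1)⟩

end Shatters

section Update

variable {ι : Type*} [DecidableEq ι] {V : ι → Type*}

theorem exists_subfamily_card_eq {A : ∀ j, Finset (V j)} {p q : ι} {d : ℕ}
    (h : ∀ j ≠ p, j ≠ q → d ≤ #(A j)) :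
    ∃ G : ∀ j, Finset (V j), (∀ j, G j ⊆ A j) ∧ G p = A p ∧ G q = A q ∧
      ∀ j ≠ p, j ≠ q → #(G j) = d := by
  have hG : ∀ j, ∃ t ⊆ A j, (j = p ∨ j = q → t = A j) ∧ (j ≠ p → j ≠ q → #t = d) := by
    intro j
    by_cases hj : j = p ∨ j = q
    · exact ⟨A j, subset_rfl, fun _ => rfl, fun hp hq => (hj.elim hp hq).elim⟩
    · rw [not_or] at hj
      obtain ⟨t, ht, htd⟩ := exists_subset_card_eq (h j hj.1 hj.2)
      exact ⟨t, ht, fun h' => (h'.elim hj.1 hj.2).elim, fun _ _ => htd⟩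
  choose G hGA hGpq hGd using hG
  exact ⟨G, hGA, hGpq p (Or.inl rfl), hGpq q (Or.inr rfl), hGd⟩

variable [Fintype ι] {F : (∀ j, V j) → ℝ} {r s : ℝ}

/- A box with its parameter in coordinate `p` is encoded as a `piFinset` whose `p`-side is a
singleton; the parameter `c` is written into that coordinate by `update x p c`. -/

theorem Shatters.update_swap (hrs : r < s) {p q : ι} (hpq : p ≠ q) {G : ∀ j, Finset (V j)}
    {a : V p} {b : V q} (hGp : G p = {a}) (hGq : G q = {b}) {Z₀ : Finset (V q)} {n : ℕ}
    (h : Shatters (fun x c => F (update x p c)) r s ↑(piFinset (update G q Z₀)))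
    (hcard : 2 ^ (#(piFinset G) * n) ≤ #Z₀) (hP : n ≠ 0 → (piFinset G).Nonempty) :
    ∃ C : Finset (V p), #C = n ∧
      Shatters (fun x c => F (update x q c)) r s ↑(piFinset (update G p C)) := by
  have hPq : ∀ x ∈ piFinset G, x q = b := fun x hx => by
    simpa [hGq] using mem_piFinset.1 hx q
  have h' : Shatters (fun xz y => F (update (update xz.1 q xz.2) p y)) r s
      (↑(piFinset G) ×ˢ ↑Z₀) := by
    refine h.comp (fun xz => update xz.1 q xz.2) ?_ ?_ fun _ _ _ => rfl
    · rintro ⟨x, z⟩ ⟨hx : x ∈ _, -⟩ ⟨x', z'⟩ ⟨hx' : x' ∈ _, -⟩ hxx'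
      have hz : z = z' := by simpa using congrFun hxx' q
      subst hz
      refine Prod.ext (funext fun j => ?_) rfl
      by_cases hj : j = q
      · subst hj; exact (hPq x hx).trans (hPq x' hx').symm
      · simpa [hj] using congrFun hxx' j
    · rintro ⟨x, z⟩ ⟨hx : x ∈ _, hz : z ∈ _⟩
      refine Finset.mem_coe.2 (mem_piFinset.2 fun j => ?_)
      by_cases hj : j = q
      · subst hj; simpa using hz
      · simpa [update_of_ne hj] using mem_piFinset.1 hx j
  obtain ⟨C, hC, hCsh⟩ :=
    h'.exists_finset_swap (g := fun x z y => F (update (update x q z) p y)) hrs hcard hP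
  refine ⟨C, hC, hCsh.comp (fun x => (update x p a, x p)) ?_ ?_ fun x _ c => ?_⟩
  · intro x _ x' _ hxx'
    simpa using congrArg (fun yz => update yz.1 p yz.2) hxx'
  · intro x hx
    have hx := mem_piFinset.1 (Finset.mem_coe.1 hx)
    refine ⟨Finset.mem_coe.2 (mem_piFinset.2 fun j => ?_), by simpa using hx p⟩
    by_cases hj : j = p
    · subst hj; simp [hGp]
    · simpa [update_of_ne hj] using hx j
  · simp only
    rw [update_comm hpq.symm, update_idem, update_eq_self]

theorem card_piFinset_mul_eq_prod_update {G : ∀ j, Finset (V j)} {p : ι} (hGp : #(G p) = 1)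
    (n : ℕ) : #(piFinset G) * n = ∏ j, update (fun j => #(G j)) p n j := by
  rw [card_piFinset, prod_update_of_mem (mem_univ p), Fintype.prod_eq_mul_prod_compl p,
    compl_eq_univ_sdiff, hGp, one_mul, mul_comm]

theorem prod_eq_pow_card_sub_one {f : ι → ℕ} {d : ℕ} (q : ι) (hq : f q = 1)
    (hf : ∀ j ≠ q, f j = d) : ∏ j, f j = d ^ (card ι - 1) := by
  rw [Fintype.prod_eq_mul_prod_compl q, hq, one_mul,
    Finset.prod_congr rfl fun j hj => hf j (by simpa using hj), prod_const, card_compl,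
    card_singleton]

theorem Shatters.exists_update_card_eq_of_ne (hrs : r < s) {p q : ι} (hpq : p ≠ q)
    {A : ∀ j, Finset (V j)} {a : V p} (hAp : A p = {a}) {d : ℕ}
    (hA : ∀ j ≠ p, j ≠ q → #(A j) = d) (hAq : 2 ^ d ^ (card ι - 1) ≤ #(A q))
    (h : Shatters (fun x c => F (update x p c)) r s ↑(piFinset A)) :
    ∃ B : ∀ j, Finset (V j), #(B q) = 1 ∧ (∀ j ≠ q, #(B j) = d) ∧
      Shatters (fun x c => F (update x q c)) r s ↑(piFinset B) := by
  obtain ⟨b, -⟩ := card_pos.1 (Nat.one_le_two_pow.trans hAq)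
  set G := update A q {b}
  have hGp : G p = {a} := by simp [G, update_of_ne hpq, hAp]
  have hGd : ∀ j ≠ p, j ≠ q → #(G j) = d := fun j hjp hjq => by
    simp [G, update_of_ne hjq, hA j hjp hjq]
  have hcard : #(piFinset G) * d = d ^ (card ι - 1) := by
    rw [card_piFinset_mul_eq_prod_update (p := p) (by simp [hGp])]
    refine prod_eq_pow_card_sub_one q (by simp [G, update_of_ne (Ne.symm hpq)]) fun j hjq => ?_
    by_cases hjp : j = p
    · subst hjp; simp
    · simp [update_of_ne hjp, hGd j hjp hjq]
  have hne : d ≠ 0 → (piFinset G).Nonempty := fun hd =>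
    piFinset_nonempty.2 fun j => by
      by_cases hjp : j = p
      · subst hjp; simp [hGp]
      by_cases hjq : j = q
      · subst hjq; simp [G]
      · rw [← Finset.card_pos, hGd j hjp hjq]; omega
  obtain ⟨C, hC, hCsh⟩ := Shatters.update_swap hrs hpq hGp (update_self q _ A)
    (by simpa [G] using h) (hcard ▸ hAq) hne
  refine ⟨update G p C, by simp [update_of_ne (Ne.symm hpq), G], fun j hjq => ?_, hCsh⟩
  by_cases hjp : j = p
  · subst hjp; simpa using hC
  · simp [update_of_ne hjp, hGd j hjp hjq]

theorem Shatters.exists_update_card_eq (hrs : r < s) (hι : 2 ≤ card ι) {p : ι} (q : ι)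
    {A : ∀ j, Finset (V j)} {a : V p} (hAp : A p = {a}) {d : ℕ}
    (hA : ∀ j ≠ p, 2 ^ d ^ (card ι - 1) ≤ #(A j))
    (h : Shatters (fun x c => F (update x p c)) r s ↑(piFinset A)) :
    ∃ B : ∀ j, Finset (V j), #(B q) = 1 ∧ (∀ j ≠ q, #(B j) = d) ∧
      Shatters (fun x c => F (update x q c)) r s ↑(piFinset B) := by
  have hdA : ∀ j ≠ p, d ≤ #(A j) := fun j hj =>
    ((Nat.le_self_pow (by omega) d).trans Nat.lt_two_pow_self.le).trans (hA j hj)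
  obtain ⟨G, hGA, hGp, hGq, hGd⟩ := exists_subfamily_card_eq (q := q) fun j hj _ => hdA j hj
  have hG : Shatters (fun x c => F (update x p c)) r s ↑(piFinset G) :=
    h.mono (coe_subset.2 (piFinset_subset _ _ hGA))
  by_cases hpq : p = q
  · subst hpq
    exact ⟨G, by simp [hGp, hAp], fun j hj => hGd j hj hj, hG⟩
  · exact hG.exists_update_card_eq_of_ne hrs hpq (hGp.trans hAp) hGd
      (hGq ▸ hA q (Ne.symm hpq))

end Update

theorem Shatters.piCongrLeft {ι ι' : Type*} [DecidableEq ι] [Fintype ι] [DecidableEq ι']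
    [Fintype ι'] {W : ι' → Type*} {F : (∀ j, W j) → ℝ} {r s : ℝ} (e : ι ≃ ι')
    {p : ι} {A : ∀ i, Finset (W (e i))}
    (h : Shatters (fun x c => F (Equiv.piCongrLeft W e (update x p c))) r s ↑(piFinset A)) :
    Shatters (fun y c => F (update y (e p) c)) r s
      ↑(piFinset (Equiv.piCongrLeft (fun j => Finset (W j)) e A)) := by
  refine h.comp (Equiv.piCongrLeft W e).symm (Equiv.injective _).injOn (fun y hy => ?_)
    fun y _ c => ?_
  · refine Finset.mem_coe.2 (mem_piFinset.2 fun i => ?_)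
    simpa using mem_piFinset.1 (Finset.mem_coe.1 hy) (e i)
  · have hupd : ∀ x c, Equiv.piCongrLeft W e (update x p c) =
        update (Equiv.piCongrLeft W e x) (e p) c :=
      fun x c => piCongrLeft'_symm_update W e.symm x p c
    rw [hupd, Equiv.apply_symm_apply]

theorem isRSShattered_iff_shatters {k : ℕ} {V : Fin (k + 1) → Type} {f : (∀ i, V i) → ℝ}
    {r s : ℝ} {A : ∀ i : Fin k, Set (V i.castSucc)} :
    IsRSShattered f r s A ↔ Shatters (fun a c => f (Fin.snoc a c)) r s (Set.univ.pi A) := by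
  refine ⟨fun h S => ?_, fun h S _ => ?_⟩
  · obtain ⟨c, hc⟩ := h (S ∩ Set.univ.pi A) fun a ha i => ha.2 i (Set.mem_univ i)
    exact ⟨c, fun a ha => ⟨fun haS => (hc a (Set.mem_univ_pi.1 ha)).1 ⟨haS, ha⟩,
      fun haS => (hc a (Set.mem_univ_pi.1 ha)).2 fun h => haS h.1⟩⟩
  · obtain ⟨c, hc⟩ := h S
    exact ⟨c, fun a ha => hc a (Set.mem_univ_pi.2 ha)⟩

theorem isRSShattered_iff_shatters_update {k : ℕ} {V : Fin (k + 1) → Type}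
    {f : (∀ i, V i) → ℝ} {r s : ℝ} {B : ∀ i, Finset (V i)} {z : V (Fin.last k)}
    (hB : B (Fin.last k) = {z}) :
    IsRSShattered f r s (fun i => ↑(B i.castSucc)) ↔
      Shatters (fun x c => f (update x (Fin.last k) c)) r s ↑(piFinset B) := by
  rw [isRSShattered_iff_shatters]
  refine ⟨fun h => h.comp Fin.init ?_ ?_ fun x _ c => ?_,
    fun h => h.comp (Fin.snoc · z) ?_ ?_ fun a _ c => by rw [Fin.update_snoc_last]⟩
  · intro x hx x' hx' hxx'
    have hlast : ∀ y ∈ (piFinset B : Set (∀ i, V i)), y (Fin.last k) = z := fun y hy => by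
      simpa [hB] using mem_piFinset.1 hy (Fin.last k)
    rw [← Fin.snoc_init_self x, ← Fin.snoc_init_self x', hxx', hlast x hx, hlast x' hx']
  · exact fun x hx => Set.mem_univ_pi.2 fun i => mem_piFinset.1 hx i.castSucc
  · rw [← Fin.update_snoc_last (x (Fin.last k)) (Fin.init x) c, Fin.snoc_init_self]
  · intro a _ a' _ h
    simpa using congrArg Fin.init h
  · intro a ha
    refine Finset.mem_coe.2 (mem_piFinset.2 (Fin.lastCases (by simp [hB]) fun i => ?_))
    simpa using ha i (Set.mem_univ i)

theorem stmt_16_general {k : ℕ} (hk : 1 ≤ k) {V : Fin (k + 1) → Type}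
    (f : (∀ i, V i) → ℝ)
    (d : ℝ → ℝ → ℕ) (hd : VCkFunLE f d) (σ : Equiv.Perm (Fin (k + 1))) :
    VCkFunLE (fun x : ∀ i, V (σ i) => f ((Equiv.piCongrLeft V σ) x))
      (fun r s => 2 ^ ((d r s) ^ k)) := by
  intro r s hr hrs hs1 A hA hA_sh
  obtain ⟨z, -⟩ := hA_sh ∅ (by simp)
  set A' := Equiv.piCongrLeft (fun j => Finset (V j)) σ
    (Fin.snoc (α := fun i => Finset (V (σ i))) A {z})
  have hA'_sh := ((isRSShattered_iff_shatters_update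
    (Fin.snoc_last (α := fun i => Finset (V (σ i))) {z} A)).1
      (by simpa using hA_sh)).piCongrLeft σ
  have hA'_last : A' (σ (Fin.last k)) = {z} := by simp [A']
  have hA'_card :
      ∀ j ≠ σ (Fin.last k), 2 ^ (d r s) ^ (card (Fin (k + 1)) - 1) ≤ #(A' j) := by
    intro j hj
    obtain ⟨i, rfl⟩ := σ.surjective j
    obtain ⟨i, rfl⟩ := Fin.exists_castSucc_eq.2 (fun h => hj (congrArg σ h))
    simp [A', hA]
  obtain ⟨B, hB_last, hB, hB_sh⟩ :=
    hA'_sh.exists_update_card_eq hrs (by simp; omega) (Fin.last k) hA'_last hA'_card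
  obtain ⟨b, hb⟩ := card_eq_one.1 hB_last
  exact hd r s hr hrs hs1 (fun i => B i.castSucc) (fun i => hB _ (Fin.castSucc_ne_last i))
    ((isRSShattered_iff_shatters_update hb).2 hB_sh)

/-- If `VC_k(f) ≤ d̄` then the function obtained from `f` by permuting its `k+1` variables by
`σ` satisfies `VC_k(f^σ) ≤ D̄` with `D̄_{r,s} = 2^{(d̄_{r,s})^k}`. -/
theorem stmt_16 {k : ℕ} (hk : 1 ≤ k) {V : Fin (k + 1) → Type}
    (f : (∀ i, V i) → ℝ) (hf01 : ∀ x, f x ∈ Set.Icc (0 : ℝ) 1)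
    (d : ℝ → ℝ → ℕ) (hd : VCkFunLE f d) (σ : Equiv.Perm (Fin (k + 1))) :
    VCkFunLE (fun x : ∀ i, V (σ i) => f ((Equiv.piCongrLeft V σ) x))
      (fun r s => 2 ^ ((d r s) ^ k)) :=
  stmt_16_general hk f d hd σ
end
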